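/- Let Σ be a symmetric positive semi-definite d×d real matrix and T a symmetric positive definite d×d real matrix. Then Tr[((TΣT)^{1/2} Σ (TΣT)^{1/2})^{1/2}] = Tr[T Σ]. -/

import Mathlib

open MeasureTheory ProbabilityTheory Matrix
open scoped ENNReal NNReal

noncomputable section

abbrev Ed (d : ℕ) := EuclideanSpace ℝ (Fin d)

/-- A coupling of `μ` and `ν`: a measure on the product whose marginals are `μ` and `ν`. -/
def IsCoupling {d : ℕ} (γ : Measure (Ed d × Ed d)) (μ ν : Measure (Ed d)) : Prop :=
  γ.map Prod.fst = μ ∧ γ.map Prod.snd = ν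

/-- Quadratic transport cost of a coupling. -/
def cost2 {d : ℕ} (γ : Measure (Ed d × Ed d)) : ℝ≥0∞ :=
  ∫⁻ p, ENNReal.ofReal (‖p.1 - p.2‖ ^ 2) ∂γ

/-- Squared 2-Wasserstein distance. -/
def W2sq {d : ℕ} (μ ν : Measure (Ed d)) : ℝ≥0∞ :=
  ⨅ (γ : Measure (Ed d × Ed d)) (_ : IsCoupling γ μ ν), cost2 γ

/-- 2-Wasserstein distance. -/
def W2 {d : ℕ} (μ ν : Measure (Ed d)) : ℝ :=
  Real.sqrt (W2sq μ ν).toReal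

/-- Finite second moment. -/
def FiniteSecondMoment {d : ℕ} (μ : Measure (Ed d)) : Prop :=
  ∫⁻ x, ENNReal.ofReal (‖x‖ ^ 2) ∂μ < ⊤

/-- Mean vector of a measure. -/
def meanVec {d : ℕ} (μ : Measure (Ed d)) : Ed d := ∫ x, x ∂μ

/-- Covariance matrix of a measure. -/
def covMatrix {d : ℕ} (μ : Measure (Ed d)) : Matrix (Fin d) (Fin d) ℝ :=
  Matrix.of fun i j => ∫ x, (x i - meanVec μ i) * (x j - meanVec μ j) ∂μ

/-- Positive semidefinite square root of a matrix (junk value `0` if not psd). -/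
def msqrt {d : ℕ} (S : Matrix (Fin d) (Fin d) ℝ) : Matrix (Fin d) (Fin d) ℝ :=
  @dite _ S.PosSemidef (Classical.dec _) (fun h => (h.1.eigenvectorUnitary : Matrix (Fin d) (Fin d) ℝ) *
    diagonal ((↑) ∘ Real.sqrt ∘ h.1.eigenvalues) * (star h.1.eigenvectorUnitary : Matrix (Fin d) (Fin d) ℝ)) (fun _ => 0)

/-- Standard Gaussian measure on `ℝ^d`. -/
def stdGaussian (d : ℕ) : Measure (Ed d) :=
  (Measure.pi fun _ : Fin d => gaussianReal 0 1).map (EuclideanSpace.equiv (Fin d) ℝ).symm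

/-- Gaussian measure on `ℝ^d` with mean `m` and covariance `S`. -/
def gaussianE {d : ℕ} (m : Ed d) (S : Matrix (Fin d) (Fin d) ℝ) : Measure (Ed d) :=
  (stdGaussian d).map fun x => m + (msqrt S).toEuclideanLin x

/-- Normal approximation: Gaussian with the same mean and covariance as `μ`. -/
def normalApprox {d : ℕ} (μ : Measure (Ed d)) : Measure (Ed d) :=
  gaussianE (meanVec μ) (covMatrix μ)

/-! With `A = (TΣT)^{1/2}` and `T` invertible, `(A T⁻¹ A)² = A T⁻¹ (TΣT) T⁻¹ A = AΣA`, and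
`A T⁻¹ A` is positive semidefinite, so it is the square root of `AΣA`. Its trace is
`Tr[T⁻¹ A²] = Tr[T⁻¹ TΣT] = Tr[ΣT]`. -/

section MatrixSqrt

open scoped MatrixOrder

variable {d : ℕ} {S : Matrix (Fin d) (Fin d) ℝ}

lemma msqrt_eq_cfcSqrt (hS : S.PosSemidef) : msqrt S = CFC.sqrt S := by
  unfold msqrt
  rw [dif_pos hS, CFC.sqrt_eq_cfc, cfc_nnreal_eq_real _ S hS.nonneg, hS.1.cfc_eq]
  simp [IsHermitian.cfc, Function.comp_def, Unitary.conjStarAlgAut_apply,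
    fun i => max_eq_left (hS.eigenvalues_nonneg i)]

lemma posSemidef_msqrt (hS : S.PosSemidef) : (msqrt S).PosSemidef := by
  rw [msqrt_eq_cfcSqrt hS]
  exact (CFC.sqrt_nonneg S).posSemidef

lemma msqrt_mul_msqrt (hS : S.PosSemidef) : msqrt S * msqrt S = S := by
  rw [msqrt_eq_cfcSqrt hS]
  exact CFC.sqrt_mul_sqrt_self S hS.nonneg

lemma msqrt_sq {X : Matrix (Fin d) (Fin d) ℝ} (hX : X.PosSemidef) : msqrt (X ^ 2) = X := by
  rw [msqrt_eq_cfcSqrt (hX.pow 2)]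
  exact CFC.sqrt_sq X hX.nonneg

end MatrixSqrt

lemma Matrix.PosSemidef.mul_mul_same_of_isHermitian {n R : Type*} [Fintype n] [CommRing R]
    [PartialOrder R] [StarRing R] {S A : Matrix n n R} (hS : S.PosSemidef) (hA : A.IsHermitian) :
    (A * S * A).PosSemidef := by
  simpa only [hA.eq] using hS.mul_mul_conjTranspose_same A

lemma mul_inv_mul_sq_of_mul_self_eq {n R : Type*} [Fintype n] [DecidableEq n] [CommRing R]
    {S T A : Matrix n n R} (hT : IsUnit T) (hA : A * A = T * S * T) :
    (A * T⁻¹ * A) ^ 2 = A * S * A :=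
  have hT : IsUnit T.det := (isUnit_iff_isUnit_det T).mp hT
  calc (A * T⁻¹ * A) ^ 2 = A * T⁻¹ * (A * A) * (T⁻¹ * A) := by simp only [sq, mul_assoc]
    _ = A * S * A := by
      rw [hA]
      simp only [mul_assoc, nonsing_inv_mul_cancel_left _ _ hT, mul_nonsing_inv_cancel_left _ _ hT]

lemma msqrt_mul_mul_eq_mul_inv_mul {d : ℕ} {S T A : Matrix (Fin d) (Fin d) ℝ}
    (hT : T.PosDef) (hA : A.PosSemidef) (hAA : A * A = T * S * T) :
    msqrt (A * S * A) = A * T⁻¹ * A := by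
  rw [← mul_inv_mul_sq_of_mul_self_eq hT.isUnit hAA]
  exact msqrt_sq (hT.inv.posSemidef.mul_mul_same_of_isHermitian hA.isHermitian)

/-- Matrix identity: `Tr[((TΣT)^{1/2} Σ (TΣT)^{1/2})^{1/2}] = Tr[T Σ]` for positive
semi-definite `Σ` and positive definite `T`. -/
theorem trace_sqrt_conj_identity {d : ℕ}
    (S T : Matrix (Fin d) (Fin d) ℝ) (hS : S.PosSemidef) (hT : T.PosDef) :
    (msqrt (msqrt (T * S * T) * S * msqrt (T * S * T))).trace = (T * S).trace := by
  have hTST : (T * S * T).PosSemidef := hS.mul_mul_same_of_isHermitian hT.isHermitian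
  have hAA := msqrt_mul_msqrt hTST
  rw [msqrt_mul_mul_eq_mul_inv_mul hT (posSemidef_msqrt hTST) hAA, trace_mul_cycle, hAA,
    mul_nonsing_inv_cancel_right _ _ hT.det_pos.ne'.isUnit]

end
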